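/- Suppose b₁, b₂, b₃ ≥ 0 satisfy b₁ ≤ max{γ₁₂(b₂), γ₁₃(b₃)}, b₂ ≤ max{γ₂₁(b₁), γ₂₃(b₃)}, b₃ ≤ max{γ₃₁(b₁), γ₃₂(b₂)}, where all γ_{ij} are class-K and satisfy the cyclic small-gain conditions γ₁₂∘γ₂₁<id, γ₁₃∘γ₃₁<id, γ₂₃∘γ₃₂<id, γ₁₂∘γ₂₃∘γ₃₁<id, γ₁₃∘γ₃₂∘γ₂₁<id (pointwise for s>0). Then b₁ = b₂ = b₃ = 0. -/

import Mathlib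

open NNReal

def ClassK (γ : ℝ≥0 → ℝ≥0) : Prop := Continuous γ ∧ StrictMono γ ∧ γ 0 = 0

/-!
Solving the second and third inequalities for `b₂, b₃` in terms of `b₁` (small-gain theorem for
two subsystems, with `b₁` as input) gives `b₂ ≤ max (γ₂₁ b₁) (γ₂₃ (γ₃₁ b₁))` and
`b₃ ≤ max (γ₃₁ b₁) (γ₃₂ (γ₂₁ b₁))`. Substituting into the first one bounds `b₁` by the maximum of
the four cyclic gains through node 1 evaluated at `b₁`, each of which is `< id`, so `b₁ = 0`,
and then `b₂ = b₃ = 0`.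
-/

/-- The small-gain condition `γ < id` on `(0, ∞)`. -/
def LtId (γ : ℝ≥0 → ℝ≥0) : Prop := ∀ s, 0 < s → γ s < s

namespace LtId

variable {F G f g : ℝ≥0 → ℝ≥0}

theorem eq_zero_of_le (hF : LtId F) {s : ℝ≥0} (hs : s ≤ F s) : s = 0 :=
  (eq_zero_or_pos s).resolve_right fun hs₀ => (hF s hs₀).not_ge hs

theorem sup (hF : LtId F) (hG : LtId G) : LtId (F ⊔ G) :=
  fun s hs => max_lt (hF s hs) (hG s hs)

theorem comp_comm (hf : StrictMono f) (hf₀ : f 0 = 0) (hfg : LtId (f ∘ g)) : LtId (g ∘ f) := by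
  intro s hs
  have hfs : 0 < f s := hf₀ ▸ hf hs
  by_contra! hle
  exact (hfg (f s) hfs).not_ge (hf.monotone hle)

end LtId

/-- Small-gain theorem for two subsystems with inputs `c` and `d`. -/
theorem le_max_comp_of_le_max {f g : ℝ≥0 → ℝ≥0} {u v c d : ℝ≥0} (hf : Monotone f)
    (hfg : LtId (f ∘ g)) (hu : u ≤ max c (f v)) (hv : v ≤ max d (g u)) : u ≤ max c (f d) := by
  rcases le_max_iff.1 hu with huc | huf
  · exact le_max_of_le_left huc
  rcases le_max_iff.1 hv with hvd | hvg
  · exact le_max_of_le_right (huf.trans (hf hvd))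
  rw [hfg.eq_zero_of_le (huf.trans (hf hvg))]
  exact zero_le

theorem cyclic_smallgain_zero_input_three
    (γ₁₂ γ₁₃ γ₂₁ γ₂₃ γ₃₁ γ₃₂ : ℝ≥0 → ℝ≥0)
    (h₁₂ : ClassK γ₁₂) (h₁₃ : ClassK γ₁₃) (h₂₁ : ClassK γ₂₁)
    (h₂₃ : ClassK γ₂₃) (h₃₁ : ClassK γ₃₁) (h₃₂ : ClassK γ₃₂)
    (hsg₁ : ∀ s : ℝ≥0, 0 < s → γ₁₂ (γ₂₁ s) < s)
    (hsg₂ : ∀ s : ℝ≥0, 0 < s → γ₁₃ (γ₃₁ s) < s)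
    (hsg₃ : ∀ s : ℝ≥0, 0 < s → γ₂₃ (γ₃₂ s) < s)
    (hsg₄ : ∀ s : ℝ≥0, 0 < s → γ₁₂ (γ₂₃ (γ₃₁ s)) < s)
    (hsg₅ : ∀ s : ℝ≥0, 0 < s → γ₁₃ (γ₃₂ (γ₂₁ s)) < s)
    (b₁ b₂ b₃ : ℝ≥0)
    (hb₁ : b₁ ≤ max (γ₁₂ b₂) (γ₁₃ b₃))
    (hb₂ : b₂ ≤ max (γ₂₁ b₁) (γ₂₃ b₃))
    (hb₃ : b₃ ≤ max (γ₃₁ b₁) (γ₃₂ b₂)) :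
    b₁ = 0 ∧ b₂ = 0 ∧ b₃ = 0 := by
  obtain ⟨-, m₁₂, -⟩ := h₁₂
  obtain ⟨-, m₁₃, -⟩ := h₁₃
  obtain ⟨-, -, z₂₁⟩ := h₂₁
  obtain ⟨-, m₂₃, z₂₃⟩ := h₂₃
  obtain ⟨-, -, z₃₁⟩ := h₃₁
  obtain ⟨-, m₃₂, z₃₂⟩ := h₃₂
  have hsg₃' : LtId (γ₃₂ ∘ γ₂₃) := LtId.comp_comm m₂₃ z₂₃ hsg₃
  have hb₂' := le_max_comp_of_le_max m₂₃.monotone hsg₃ hb₂ hb₃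
  have hb₃' := le_max_comp_of_le_max m₃₂.monotone hsg₃' hb₃ hb₂
  have hb₁' : b₁ ≤ (γ₁₂ ∘ γ₂₁ ⊔ γ₁₂ ∘ γ₂₃ ∘ γ₃₁ ⊔ (γ₁₃ ∘ γ₃₁ ⊔ γ₁₃ ∘ γ₃₂ ∘ γ₂₁)) b₁ := by
    refine hb₁.trans (max_le_max ?_ ?_)
    · exact (m₁₂.monotone hb₂').trans_eq m₁₂.monotone.map_max
    · exact (m₁₃.monotone hb₃').trans_eq m₁₃.monotone.map_max
  obtain rfl : b₁ = 0 := ((LtId.sup hsg₁ hsg₄).sup (LtId.sup hsg₂ hsg₅)).eq_zero_of_le hb₁'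
  simp only [z₂₁, z₃₁, z₂₃, z₃₂, max_self, nonpos_iff_eq_zero] at hb₂' hb₃'
  exact ⟨rfl, hb₂', hb₃'⟩
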